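/- For fixed $k \ge 3$, $g_k(s) / \binom{s}{k} \to k!/(k^k - k)$ as $s \to \infty$. -/

import Mathlib

/-- `p n k` : maximum of `∏ q i` over partitions of `n` into `k` nonnegative
parts each strictly less than `n` (so `p 0 0 = 1`). -/
noncomputable def p (n k : ℕ) : ℕ :=
  sSup {m | ∃ q : Fin k → ℕ, (∑ i, q i) = n ∧ (∀ i, q i < n) ∧ m = ∏ i, q i}

open Finset

variable {k : ℕ}

lemma expand_pow (q : Fin k → ℝ) :
    (∑ i, q i) ^ k = ∑ x : Fin k → Fin k, ∏ i, q (x i) := by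
  rw [← Fin.prod_const k (∑ i, q i)]
  exact Finset.prod_univ_sum (fun _ => univ) fun _ j => q j

lemma prod_eval (q : Fin k → ℝ) (i : Fin k) :
    ∏ x : Fin k → Fin k, q (x i) = (∏ a, q a) ^ k ^ (k - 1) := by
  rw [Fintype.prod_equiv (Equiv.funSplitAt i (Fin k)) (fun x => q (x i)) (fun p => q p.1)
    (fun x => by simp)]
  rw [Fintype.prod_prod_type]
  simp only [Finset.prod_const]
  rw [← Finset.prod_pow]
  congr 1
  simp [Fintype.card_fun]

/-- the set of constant functions -/
def Cst (k : ℕ) : Finset (Fin k → Fin k) := univ.image (fun c => Function.const (Fin k) c)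

lemma card_Cst (hk : 1 ≤ k) : (Cst k).card = k := by
  rw [Cst, Finset.card_image_of_injective]
  · simp
  · have : Nonempty (Fin k) := ⟨⟨0, hk⟩⟩
    exact Function.const_injective

lemma prod_total (hk : 1 ≤ k) (q : Fin k → ℝ) :
    ∏ x : Fin k → Fin k, ∏ i, q (x i) = (∏ a, q a) ^ k ^ k := by
  rw [Finset.prod_comm]
  simp_rw [prod_eval q]
  rw [Finset.prod_const, ← pow_mul, Finset.card_univ, Fintype.card_fin]
  congr 1
  rw [← pow_succ, Nat.sub_add_cancel hk]

lemma sum_Cst (q : Fin k → ℝ) : ∑ x ∈ Cst k, ∏ i, q (x i) = ∑ c, q c ^ k := by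
  rw [Cst, Finset.sum_image (fun a _ b _ h => by
    have : Nonempty (Fin k) := ⟨a⟩
    exact Function.const_injective h)]
  simp [Function.const]

lemma prod_Cst (q : Fin k → ℝ) : ∏ x ∈ Cst k, ∏ i, q (x i) = (∏ a, q a) ^ k := by
  rw [Cst, Finset.prod_image (fun a _ b _ h => by
    have : Nonempty (Fin k) := ⟨a⟩
    exact Function.const_injective h)]
  simp [Function.const, Finset.prod_pow]

lemma card_nonCst (hk : 1 ≤ k) : (univ \ Cst k).card = k ^ k - k := by
  rw [Finset.card_sdiff_of_subset (Finset.subset_univ _), card_Cst hk, Finset.card_univ, Fintype.card_fun]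
  simp

lemma k_le_pow (hk : 3 ≤ k) : k < k ^ k := (Nat.lt_pow_self (by omega : 1 < k) : k < k ^ k)

lemma cast_N (hk : 3 ≤ k) : ((k ^ k - k : ℕ) : ℝ) = (k:ℝ)^k - k := by
  push_cast [Nat.cast_sub (le_of_lt (k_le_pow hk))]
  ring

lemma prod_nonCst (hk : 3 ≤ k) (q : Fin k → ℝ) (hq : ∀ i, 0 < q i) :
    ∏ x ∈ univ \ Cst k, ∏ i, q (x i) = (∏ a, q a) ^ (k ^ k - k) := by
  have h1 : (Cst k) ⊆ univ := Finset.subset_univ _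
  have h2 := Finset.prod_sdiff (f := fun x : Fin k → Fin k => ∏ i, q (x i)) h1
  rw [prod_total (by omega) q, prod_Cst q] at h2
  have hpos : (0:ℝ) < (∏ a, q a) ^ k := pow_pos (Finset.prod_pos (fun i _ => hq i)) k
  apply mul_right_cancel₀ (ne_of_gt hpos)
  rw [h2, ← pow_add]
  congr 1
  have := k_le_pow hk
  omega

lemma amgm (hk : 3 ≤ k) (q : Fin k → ℝ) (hq : ∀ i, 0 ≤ q i) :
    ((k:ℝ)^k - k) * ∏ i, q i ≤ ∑ x ∈ univ \ Cst k, ∏ i, q (x i) := by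
  have hzn : ∀ x ∈ univ \ Cst k, (0:ℝ) ≤ ∏ i, q (x i) :=
    fun x _ => Finset.prod_nonneg fun i _ => hq (x i)
  by_cases hz : ∏ i, q i = 0
  · rw [hz, mul_zero]; exact Finset.sum_nonneg hzn
  · have hqpos : ∀ i, 0 < q i := by
      intro i
      rcases lt_or_eq_of_le (hq i) with h | h
      · exact h
      · exact absurd (Finset.prod_eq_zero (Finset.mem_univ i) h.symm) hz
    set N : ℕ := k ^ k - k with hNdef
    have hNpos : 0 < N := by have := k_le_pow hk; omega
    have hNR : (0:ℝ) < N := by exact_mod_cast hNpos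
    have hcard : (univ \ Cst k).card = N := card_nonCst (by omega)
    have main := Real.geom_mean_le_arith_mean_weighted (univ \ Cst k)
      (fun _ => (N:ℝ)⁻¹) (fun x => ∏ i, q (x i))
      (fun _ _ => by positivity)
      (by rw [Finset.sum_const, hcard, nsmul_eq_mul, mul_inv_cancel₀ (ne_of_gt hNR)])
      hzn
    rw [Real.finset_prod_rpow _ _ hzn, prod_nonCst hk q hqpos,
      ← Real.rpow_natCast _ N, ← Real.rpow_mul (Finset.prod_nonneg fun i _ => hq i),
      mul_inv_cancel₀ (ne_of_gt hNR), Real.rpow_one, ← Finset.mul_sum] at main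
    rw [← cast_N hk, ← hNdef]
    calc (N:ℝ) * ∏ i, q i ≤ N * ((N:ℝ)⁻¹ * ∑ x ∈ univ \ Cst k, ∏ i, q (x i)) := by
          exact mul_le_mul_of_nonneg_left main (le_of_lt hNR)
      _ = ∑ x ∈ univ \ Cst k, ∏ i, q (x i) := by
          rw [← mul_assoc, mul_inv_cancel₀ (ne_of_gt hNR), one_mul]

lemma key_ineq (hk : 3 ≤ k) (q : Fin k → ℝ) (hq : ∀ i, 0 ≤ q i) :
    ∑ i, q i ^ k + ((k:ℝ)^k - k) * ∏ i, q i ≤ (∑ i, q i) ^ k := by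
  rw [expand_pow q, ← Finset.sum_sdiff (Finset.subset_univ (Cst k)), sum_Cst q]
  have := amgm hk q hq
  linarith

/-- The Erdős–Hajnal function `g k s`: `g k s = 0` for `s < k` and otherwise the
maximum of `∑ i, g k (s i) + ∏ i, s i` over nontrivial partitions of `s` into `k` parts. -/
noncomputable def g (k : ℕ) (s : ℕ) : ℕ :=
  Nat.strongRecOn s fun s ih =>
    if s < k then 0
    else sSup {m | ∃ q : Fin k → ℕ, ∃ h : ∀ i, q i < s,
      (∑ i, q i) = s ∧ m = (∑ i, ih (q i) (h i)) + ∏ i, q i}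

theorem g_eq (k s : ℕ) : g k s =
    if s < k then 0
    else sSup {m | ∃ q : Fin k → ℕ, ∃ _ : ∀ i, q i < s,
      (∑ i, q i) = s ∧ m = (∑ i, g k (q i)) + ∏ i, q i} := by
  rw [g, Nat.strongRecOn_eq]
  rfl

lemma Kr_pos (hk : 3 ≤ k) : (0:ℝ) < (k:ℝ)^k - k := by
  rw [← cast_N hk]
  have := k_le_pow hk
  exact_mod_cast Nat.sub_pos_of_lt this

lemma g_upper (hk : 3 ≤ k) (n : ℕ) : ((k:ℝ)^k - k) * (g k n) ≤ (n:ℝ)^k := by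
  induction n using Nat.strong_induction_on with
  | _ n ih =>
  have hKpos := Kr_pos hk
  rw [g_eq]
  split_ifs with h
  · simp
  · set S := {m | ∃ q : Fin k → ℕ, ∃ _ : ∀ i, q i < n,
      (∑ i, q i) = n ∧ m = (∑ i, g k (q i)) + ∏ i, q i} with hSdef
    have key : ∀ m ∈ S, ((k:ℝ)^k - k) * m ≤ (n:ℝ)^k := by
      rintro m ⟨q, hlt, hsum, rfl⟩
      have h1 : ∀ i, ((k:ℝ)^k - k) * (g k (q i)) ≤ (q i:ℝ)^k := fun i => ih _ (hlt i)
      have h2 := key_ineq hk (fun i => (q i : ℝ)) (fun i => Nat.cast_nonneg _)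
      have hs : (∑ i, (q i:ℝ)) = (n:ℝ) := by
        rw [← hsum]; push_cast; ring
      rw [hs] at h2
      push_cast
      rw [mul_add, Finset.mul_sum]
      calc (∑ i, ((k:ℝ)^k - k) * (g k (q i))) + ((k:ℝ)^k - k) * ∏ i, (q i:ℝ)
          ≤ (∑ i, (q i:ℝ)^k) + ((k:ℝ)^k - k) * ∏ i, (q i:ℝ) := by
            gcongr with i
            exact h1 i
        _ ≤ (n:ℝ)^k := h2
    rcases Set.eq_empty_or_nonempty S with hS | hS
    · rw [hS, csSup_empty]
      simp
    · have hub : ∀ m ∈ S, m ≤ Nat.floor ((n:ℝ)^k / ((k:ℝ)^k - k)) := by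
        intro m hm
        apply Nat.le_floor
        rw [le_div_iff₀ hKpos, mul_comm]
        exact key m hm
      have h3 : sSup S ≤ Nat.floor ((n:ℝ)^k / ((k:ℝ)^k - k)) := csSup_le hS hub
      have h4 : ((sSup S : ℕ) : ℝ) ≤ (n:ℝ)^k / ((k:ℝ)^k - k) :=
        le_trans (by exact_mod_cast h3) (Nat.floor_le (by positivity))
      rw [mul_comm, ← le_div_iff₀ hKpos]
      exact h4

lemma elem_bound (hk : 3 ≤ k) (n : ℕ) (q : Fin k → ℕ) (hsum : (∑ i, q i) = n) :
    ((k:ℝ)^k - k) * (((∑ i, g k (q i)) + ∏ i, q i : ℕ) : ℝ) ≤ (n:ℝ)^k := by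
  have h1 : ∀ i, ((k:ℝ)^k - k) * (g k (q i)) ≤ (q i:ℝ)^k := fun i => g_upper hk (q i)
  have h2 := key_ineq hk (fun i => (q i : ℝ)) (fun i => Nat.cast_nonneg _)
  have hs : (∑ i, (q i:ℝ)) = (n:ℝ) := by rw [← hsum]; push_cast; ring
  rw [hs] at h2
  push_cast
  rw [mul_add, Finset.mul_sum]
  calc (∑ i, ((k:ℝ)^k - k) * (g k (q i))) + ((k:ℝ)^k - k) * ∏ i, (q i:ℝ)
      ≤ (∑ i, (q i:ℝ)^k) + ((k:ℝ)^k - k) * ∏ i, (q i:ℝ) := by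
        gcongr with i
        exact h1 i
    _ ≤ (n:ℝ)^k := h2

lemma pow_diff_le (m : ℕ) (a b : ℝ) (hb : 0 ≤ b) (hba : b ≤ a) :
    a^(m+1) - b^(m+1) ≤ (m+1) * (a - b) * a^m := by
  induction m with
  | zero => simp
  | succ m ih =>
    have ha : 0 ≤ a := le_trans hb hba
    have hpow : b^(m+1) ≤ a^(m+1) := pow_le_pow_left₀ hb hba _
    have hpa : 0 ≤ a^m := pow_nonneg ha m
    calc a^(m+2) - b^(m+2) = a * (a^(m+1) - b^(m+1)) + (a - b) * b^(m+1) := by ring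
      _ ≤ a * ((m+1) * (a - b) * a^m) + (a - b) * a^(m+1) := by
          gcongr
      _ = ((m:ℝ)+2) * (a - b) * a^(m+1) := by ring
      _ = ((m+1:ℕ)+1:ℝ) * (a - b) * a^(m+1) := by push_cast; ring

lemma bern (m : ℕ) (x : ℝ) (hx : 0 ≤ x) (h : 2*m*x ≤ 1) : (1+x)^m ≤ 1 + 2*m*x := by
  induction m with
  | zero => simp
  | succ m ih =>
    have h' : 2*m*x ≤ 1 := by
      push_cast at h
      nlinarith
    have ih' := ih h'
    have h1x : (0:ℝ) ≤ 1 + x := by linarith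
    calc (1+x)^(m+1) = (1+x)^m * (1+x) := by rw [pow_succ]
      _ ≤ (1 + 2*m*x) * (1+x) := by
          apply mul_le_mul_of_nonneg_right ih' h1x
      _ = 1 + (2*m+1)*x + 2*m*x*x := by ring
      _ ≤ 1 + 2*((m:ℝ)+1)*x := by push_cast at h ⊢; nlinarith
      _ = 1 + 2*((m+1:ℕ):ℝ)*x := by push_cast; ring

set_option maxHeartbeats 1000000 in
lemma g_lower (hk : 3 ≤ k) (n : ℕ) :
    (n:ℝ)^k - 4*(k:ℝ)^2*(n:ℝ)^(k-1) ≤ ((k:ℝ)^k - k) * (g k n) := by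
  induction n using Nat.strong_induction_on with
  | _ n ih =>
  have hKpos := Kr_pos hk
  set K : ℝ := (k:ℝ) with hKdef
  have hK3 : (3:ℝ) ≤ K := by rw [hKdef]; exact_mod_cast hk
  by_cases hn : n ≤ 4*k^2
  · -- trivial case
    have h1 : (n:ℝ) ≤ 4*K^2 := by rw [hKdef]; exact_mod_cast hn
    have h2 : (n:ℝ)^k = (n:ℝ)^(k-1) * n := by
      conv_lhs => rw [show k = (k-1)+1 by omega, pow_succ]
    have h3 : (0:ℝ) ≤ (n:ℝ)^(k-1) := by positivity
    have h6 := mul_le_mul_of_nonneg_left h1 h3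
    have h4 : (n:ℝ)^k - 4*K^2*(n:ℝ)^(k-1) ≤ 0 := by linarith only [h2, h6]
    have h5 : (0:ℝ) ≤ (K^k - K) * (g k n) := by positivity
    linarith
  · push_neg at hn
    have hn36 : 36 < n := by
      have h9 : 3*3 ≤ k*k := Nat.mul_le_mul hk hk
      have hsq : k^2 = k*k := by ring
      omega
    set e : ℕ := k - 1 with hedef
    set f : ℕ := k - 2 with hfdef
    have hef : e = f + 1 := by omega
    have hke : k = e + 1 := by omega
    set M : ℕ := n / k with hMdef
    set r : ℕ := n % k with hrdef
    set q : Fin k → ℕ := fun i => M + if i.val < r then 1 else 0 with hqdef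
    have hrk : r < k := Nat.mod_lt _ (by omega)
    have hdiv : k * M + r = n := Nat.div_add_mod n k
    have hMn : M + 1 < n := by
      have h1 : n / k ≤ n / 3 := Nat.div_le_div_left hk (by norm_num)
      omega
    have hqlt : ∀ i, q i < n := by
      intro i
      have : q i ≤ M + 1 := by simp only [hqdef]; split <;> omega
      omega
    have hqsum : (∑ i, q i) = n := by
      simp only [hqdef]
      rw [Finset.sum_add_distrib, Finset.sum_const, Finset.card_univ, Fintype.card_fin,
        smul_eq_mul]
      rw [Fin.sum_univ_eq_sum_range (fun j => if j < r then 1 else 0) k]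
      have h1 : (Finset.range k).filter (fun j => j < r) = Finset.range r := by
        ext j; simp; omega
      rw [Finset.sum_boole, h1, Finset.card_range]
      simpa using hdiv
    have hMq1 : ∀ i, (M:ℝ) ≤ (q i:ℝ) := by
      intro i
      have h : M ≤ q i := Nat.le_add_right _ _
      exact_mod_cast h
    have hMq2 : ∀ i, (q i:ℝ) ≤ (M:ℝ)+1 := by
      intro i
      have h : q i ≤ M + 1 := by simp only [hqdef]; split <;> omega
      exact_mod_cast h
    have hn0 : 0 < n := by omega
    have hf1 : f ≠ 0 := by omega
    clear_value K e f M r q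
    -- main body
    have hnk : ¬ n < k := by
      have h1 : k ≤ k*k := Nat.le_mul_of_pos_left k (by omega)
      have h2 : k*k ≤ k^2 := by rw [pow_two]
      omega
    have hgn : g k n = sSup {m | ∃ q : Fin k → ℕ, ∃ _ : ∀ i, q i < n,
        (∑ i, q i) = n ∧ m = (∑ i, g k (q i)) + ∏ i, q i} := by
      rw [g_eq, if_neg hnk]
    obtain ⟨m₀, hm₀⟩ : ∃ m₀ : ℕ, m₀ = (∑ i, g k (q i)) + ∏ i, q i := ⟨_, rfl⟩
    have hmem : m₀ ∈ {m | ∃ q : Fin k → ℕ, ∃ _ : ∀ i, q i < n,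
        (∑ i, q i) = n ∧ m = (∑ i, g k (q i)) + ∏ i, q i} := ⟨q, hqlt, hqsum, hm₀⟩
    have hbdd : BddAbove {m | ∃ q : Fin k → ℕ, ∃ _ : ∀ i, q i < n,
        (∑ i, q i) = n ∧ m = (∑ i, g k (q i)) + ∏ i, q i} := by
      refine ⟨Nat.floor ((n:ℝ)^k / (K^k - K)), ?_⟩
      rintro m ⟨q', hlt', hsum', rfl⟩
      apply Nat.le_floor
      rw [le_div_iff₀ hKpos, mul_comm, hKdef]
      exact elem_bound hk n q' hsum'
    have hsup : m₀ ≤ g k n := by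
      rw [hgn]
      exact le_csSup hbdd hmem
    have hKnn : (0:ℝ) ≤ K^k - K := le_of_lt hKpos
    have step0 : (K^k - K) * (m₀:ℝ) ≤ (K^k - K) * (g k n) := by
      have : (m₀:ℝ) ≤ (g k n : ℝ) := by exact_mod_cast hsup
      exact mul_le_mul_of_nonneg_left this hKnn
    -- basic casts
    have hN0 : (0:ℝ) < (n:ℝ) := by exact_mod_cast hn0
    have hM0 : (0:ℝ) ≤ (M:ℝ) := Nat.cast_nonneg _
    have hq0 : ∀ i, (0:ℝ) ≤ (q i:ℝ) := fun i => Nat.cast_nonneg _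
    have hdivR : K*(M:ℝ) + (r:ℝ) = (n:ℝ) := by rw [hKdef]; exact_mod_cast hdiv
    have hrR : (r:ℝ) ≤ K := by rw [hKdef]; exact_mod_cast le_of_lt hrk
    have hr0 : (0:ℝ) ≤ (r:ℝ) := Nat.cast_nonneg _
    have hkM : (n:ℝ) - K ≤ K * (M:ℝ) := by linarith
    have hkM2 : K*((M:ℝ)+1) ≤ (n:ℝ) + K := by linarith only [hdivR, hr0]
    have h4K : 4*K^2 ≤ (n:ℝ) := by
      rw [hKdef]
      have : ((4*k^2 : ℕ):ℝ) ≤ (n:ℝ) := by exact_mod_cast le_of_lt hn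
      push_cast at this
      linarith
    have hK0 : (0:ℝ) ≤ K := by linarith
    have hKK : K*1 ≤ K*K := mul_le_mul_of_nonneg_left (by linarith) hK0
    have hkn : K ≤ (n:ℝ) := by linarith only [hKK, h4K, hK0, hK3]
    have heK : ((e:ℕ):ℝ) + 1 = K := by
      rw [hKdef, hke]
      push_cast
      ring
    -- A1
    have A1 : K*(M:ℝ)^k ≤ ∑ i, (q i:ℝ)^k := by
      have h := Finset.card_nsmul_le_sum Finset.univ (fun i => (q i:ℝ)^k) ((M:ℝ)^k)
        (fun i _ => pow_le_pow_left₀ hM0 (hMq1 i) k)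
      rw [Finset.card_univ, Fintype.card_fin, nsmul_eq_mul] at h
      rw [hKdef]
      exact h
    -- A2
    have A2 : (M:ℝ)^k ≤ ∏ i, (q i:ℝ) := by
      have h := Finset.prod_le_prod (s := Finset.univ) (f := fun _ : Fin k => (M:ℝ)) (g := fun i => (q i:ℝ))
        (fun i _ => hM0) (fun i _ => hMq1 i)
      rwa [Finset.prod_const, Finset.card_univ, Fintype.card_fin] at h
    -- A5
    have A5 : ∑ i, (q i:ℝ)^e ≤ K*((M:ℝ)+1)^e := by
      have h := Finset.sum_le_card_nsmul Finset.univ (fun i => (q i:ℝ)^e) (((M:ℝ)+1)^e)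
        (fun i _ => pow_le_pow_left₀ (hq0 i) (hMq2 i) e)
      rw [Finset.card_univ, Fintype.card_fin, nsmul_eq_mul] at h
      rw [hKdef]
      exact h
    -- D
    have hnK0 : (0:ℝ) ≤ (n:ℝ) - K := by linarith
    have d1 : ((n:ℝ) - K)^k ≤ K^k * (M:ℝ)^k := by
      rw [← mul_pow]
      exact pow_le_pow_left₀ hnK0 hkM k
    have d2 : (n:ℝ)^k - ((n:ℝ)-K)^k ≤ K * K * (n:ℝ)^e := by
      have h := pow_diff_le e (n:ℝ) ((n:ℝ)-K) hnK0 (by linarith)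
      rw [← hke] at h
      calc (n:ℝ)^k - ((n:ℝ)-K)^k ≤ ((e:ℝ)+1) * ((n:ℝ) - ((n:ℝ)-K)) * (n:ℝ)^e := h
        _ = K * K * (n:ℝ)^e := by rw [heK]; ring
    have hid : K^k*(M:ℝ)^k = K*(M:ℝ)^k + (K^k - K)*(M:ℝ)^k := by ring
    have A2' : (K^k - K)*(M:ℝ)^k ≤ (K^k - K) * ∏ i, (q i:ℝ) :=
      mul_le_mul_of_nonneg_left A2 hKnn
    have D : (n:ℝ)^k - K^2*(n:ℝ)^e ≤ ∑ i, (q i:ℝ)^k + (K^k - K) * ∏ i, (q i:ℝ) := by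
      linarith only [A1, A2', d1, d2, hid]
    -- B
    have b1 : (K*((M:ℝ)+1))^e ≤ ((n:ℝ)+K)^e := by
      apply pow_le_pow_left₀ (by positivity) hkM2
    have heKle : ((e:ℕ):ℝ) ≤ K := by linarith [heK]
    have b2 : ((n:ℝ)+K)^e ≤ (n:ℝ)^e + 2*K^2*(n:ℝ)^f := by
      have hx : (0:ℝ) ≤ K/(n:ℝ) := by positivity
      have hb : 2*(e:ℝ)*(K/(n:ℝ)) ≤ 1 := by
        rw [mul_div_assoc', div_le_one hN0]
        have h1 : 2*(e:ℝ)*K ≤ 2*K*K := by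
          linarith only [mul_le_mul_of_nonneg_right heKle hK0]
        linarith only [h1, h4K, sq_nonneg K]
      have hber := bern e (K/(n:ℝ)) hx hb
      have hne : (n:ℝ)^e = (n:ℝ)^f * (n:ℝ) := by rw [hef, pow_succ]
      calc ((n:ℝ)+K)^e = ((n:ℝ)*(1+K/(n:ℝ)))^e := by
            congr 1
            field_simp
        _ = (n:ℝ)^e * (1+K/(n:ℝ))^e := mul_pow _ _ _
        _ ≤ (n:ℝ)^e * (1+2*(e:ℝ)*(K/(n:ℝ))) := by
            apply mul_le_mul_of_nonneg_left hber (by positivity)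
        _ = (n:ℝ)^e + 2*(e:ℝ)*K*(n:ℝ)^f := by
            rw [hne]
            field_simp
        _ ≤ (n:ℝ)^e + 2*K^2*(n:ℝ)^f := by
            have hf0 : (0:ℝ) ≤ (n:ℝ)^f := by positivity
            have h2 : 2*((e:ℝ)*K) ≤ 2*(K*K) := by
              nlinarith [mul_le_mul_of_nonneg_right heKle hK0]
            have h3 : 2*((e:ℝ)*K)*(n:ℝ)^f ≤ 2*(K*K)*(n:ℝ)^f :=
              mul_le_mul_of_nonneg_right h2 hf0
            linarith only [h3]
    have b3 : 2*K^2*(n:ℝ)^f ≤ (n:ℝ)^e/2 := by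
      have hne : (n:ℝ)^e = (n:ℝ)^f * (n:ℝ) := by rw [hef, pow_succ]
      have hf0 : (0:ℝ) ≤ (n:ℝ)^f := by positivity
      have h5 : (0:ℝ) ≤ ((n:ℝ) - 4*K^2)*(n:ℝ)^f := mul_nonneg (by linarith) hf0
      linarith only [h5, hne]
    have b4 : K^f * (K*((M:ℝ)+1)^e) = (K*((M:ℝ)+1))^e := by
      rw [mul_pow, hef]
      ring
    have b5 : (3:ℝ) ≤ K^f := by
      exact le_trans hK3 (le_self_pow₀ (by linarith) hf1)
    have hX0 : (0:ℝ) ≤ K*((M:ℝ)+1)^e := by positivity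
    have B : K*((M:ℝ)+1)^e ≤ (n:ℝ)^e/2 := by
      have h1 : 3 * (K*((M:ℝ)+1)^e) ≤ K^f * (K*((M:ℝ)+1)^e) :=
        mul_le_mul_of_nonneg_right b5 hX0
      rw [b4] at h1
      linarith [b1, b2, b3]
    -- C
    have C : 4*K^2 * ∑ i, (q i:ℝ)^e ≤ 2*K^2*(n:ℝ)^e := by
      have h1 : ∑ i, (q i:ℝ)^e ≤ (n:ℝ)^e/2 := le_trans A5 B
      have h2 := mul_le_mul_of_nonneg_left h1 (by positivity : (0:ℝ) ≤ 4*K^2)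
      linarith [h2]
    -- IH
    have hIH : ∑ i, ((q i:ℝ)^k - 4*K^2*(q i:ℝ)^e) ≤ ∑ i, (K^k - K)*((g k (q i) : ℕ):ℝ) :=
      Finset.sum_le_sum (fun i _ => ih _ (hqlt i))
    rw [Finset.sum_sub_distrib, ← Finset.mul_sum, ← Finset.mul_sum] at hIH
    have hm₀R : (m₀:ℝ) = (∑ i, ((g k (q i) : ℕ):ℝ)) + ∏ i, (q i:ℝ) := by
      rw [hm₀]
      push_cast
      ring
    have final : (n:ℝ)^k - 4*K^2*(n:ℝ)^e ≤ (K^k - K) * (m₀:ℝ) := by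
      rw [hm₀R, mul_add]
      have hpos6 : (0:ℝ) ≤ K^2*(n:ℝ)^e := by positivity
      linarith [D, C, hIH, hpos6]
    linarith [final, step0]

open Filter in
lemma stepA (hk : 3 ≤ k) :
    Filter.Tendsto (fun n : ℕ => (g k n : ℝ) / (n:ℝ)^k) Filter.atTop
      (nhds (1 / ((k:ℝ)^k - k))) := by
  have hKpos := Kr_pos hk
  have t1 : Tendsto (fun n : ℕ => ((n:ℝ))⁻¹) atTop (nhds 0) :=
    tendsto_inv_atTop_zero.comp tendsto_natCast_atTop_atTop
  have tlow : Tendsto (fun n : ℕ => (1 - 4*(k:ℝ)^2*((n:ℝ))⁻¹) / ((k:ℝ)^k - k)) atTop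
      (nhds (1 / ((k:ℝ)^k - k))) := by
    have := ((tendsto_const_nhds (x := (1:ℝ))).sub
      ((tendsto_const_nhds (x := 4*(k:ℝ)^2)).mul t1)).div_const ((k:ℝ)^k - k)
    simpa using this
  apply tendsto_of_tendsto_of_tendsto_of_le_of_le' tlow tendsto_const_nhds
  · -- lower bound eventually
    filter_upwards [eventually_ge_atTop 1] with n hn
    have hn0 : (0:ℝ) < (n:ℝ) := by exact_mod_cast hn
    have hnk0 : (0:ℝ) < (n:ℝ)^k := by positivity
    have h1 := g_lower hk n
    rw [div_le_div_iff₀ hKpos hnk0]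
    have hid : (1 - 4*(k:ℝ)^2*((n:ℝ))⁻¹) * (n:ℝ)^k = (n:ℝ)^k - 4*(k:ℝ)^2*(n:ℝ)^(k-1) := by
      have hpow : (n:ℝ)^k = (n:ℝ)^(k-1) * (n:ℝ) := by
        conv_lhs => rw [show k = (k-1)+1 by omega, pow_succ]
      rw [hpow]
      field_simp
    rw [hid, mul_comm]
    linarith [h1]
  · -- upper bound eventually
    filter_upwards [eventually_ge_atTop 1] with n hn
    have hn0 : (0:ℝ) < (n:ℝ) := by exact_mod_cast hn
    have hnk0 : (0:ℝ) < (n:ℝ)^k := by positivity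
    rw [div_le_div_iff₀ hnk0 hKpos, one_mul, mul_comm]
    exact g_upper hk n

open Filter in
lemma stepB (hk : 3 ≤ k) :
    Filter.Tendsto (fun n : ℕ => ((n.descFactorial k : ℕ) : ℝ) / (n:ℝ)^k) Filter.atTop
      (nhds 1) := by
  have t1 : Tendsto (fun n : ℕ => ((n:ℝ))⁻¹) atTop (nhds 0) :=
    tendsto_inv_atTop_zero.comp tendsto_natCast_atTop_atTop
  have tp : Tendsto (fun n : ℕ => ∏ i ∈ Finset.range k, (1 - (i:ℝ)*((n:ℝ))⁻¹)) atTop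
      (nhds 1) := by
    have h := tendsto_finset_prod (f := fun (i : ℕ) (n : ℕ) => (1 - (i:ℝ)*((n:ℝ))⁻¹))
      (a := fun _ => (1:ℝ)) (Finset.range k)
      (fun i _ => by simpa using ((tendsto_const_nhds (x := (1:ℝ))).sub
        ((tendsto_const_nhds (x := (i:ℝ))).mul t1)))
    simpa using h
  apply tp.congr'
  filter_upwards [eventually_ge_atTop k] with n hn
  have hn0 : (0:ℝ) < (n:ℝ) := by
    have : 0 < n := by omega
    exact_mod_cast this
  rw [Nat.descFactorial_eq_prod_range]
  rw [Nat.cast_prod]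
  have hnk : (n:ℝ)^k = ∏ _i ∈ Finset.range k, (n:ℝ) := by
    rw [Finset.prod_const, Finset.card_range]
  rw [hnk, ← Finset.prod_div_distrib]
  apply Finset.prod_congr rfl
  intro i hi
  have hik : i ≤ n := le_trans (le_of_lt (Finset.mem_range.mp hi)) hn
  rw [Nat.cast_sub hik]
  field_simp

open Filter in
theorem g_asymptotic (k : ℕ) (hk : 3 ≤ k) :
    Filter.Tendsto (fun s : ℕ => (g k s : ℝ) / (s.choose k : ℝ)) Filter.atTop
      (nhds ((k.factorial : ℝ) / ((k : ℝ) ^ k - k))) := by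
  have hKpos := Kr_pos hk
  have hmain := (stepA hk).mul ((tendsto_const_nhds (x := (k.factorial:ℝ))).div (stepB hk)
    one_ne_zero)
  have heq : (1/((k:ℝ)^k - k)) * ((k.factorial:ℝ)/1) = (k.factorial:ℝ)/((k:ℝ)^k - k) := by
    ring
  rw [heq] at hmain
  apply hmain.congr'
  filter_upwards [eventually_ge_atTop (max k 1)] with n hn
  have hkn : k ≤ n := le_trans (le_max_left _ _) hn
  have hn1 : 1 ≤ n := le_trans (le_max_right _ _) hn
  have hd : 0 < n.descFactorial k := by
    rw [Nat.descFactorial_eq_factorial_mul_choose]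
    exact Nat.mul_pos k.factorial_pos (Nat.choose_pos hkn)
  have hdR : (0:ℝ) < ((n.descFactorial k : ℕ):ℝ) := by exact_mod_cast hd
  have hnR : (0:ℝ) < (n:ℝ)^k := by
    have : (0:ℝ) < (n:ℝ) := by exact_mod_cast hn1
    positivity
  have hfR : (0:ℝ) < (k.factorial:ℝ) := by exact_mod_cast k.factorial_pos
  have hchoose : ((n.choose k : ℕ):ℝ) = ((n.descFactorial k : ℕ):ℝ)/(k.factorial:ℝ) := by
    rw [eq_div_iff (ne_of_gt hfR)]
    rw [← Nat.cast_mul]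
    congr 1
    rw [Nat.descFactorial_eq_factorial_mul_choose, mul_comm]
  show (g k n : ℝ)/(n:ℝ)^k * ((k.factorial:ℝ) / (((n.descFactorial k : ℕ):ℝ)/(n:ℝ)^k))
      = (g k n : ℝ) / (n.choose k : ℝ)
  rw [hchoose]
  field_simp
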